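/- Let f : ℝ^D → ℝ be twice continuously differentiable with γ_H-Lipschitz Hessian, let X be a finite set of points in ℝ^D, let xᵢ ∈ X, and suppose each point xⱼ ∈ X carries a noisy value zⱼ = f(xⱼ) + εⱼ with |εⱼ| ≤ ε̄. Then ∇f(xᵢ) belongs to the noisy gradient set { g ∈ ℝ^D : for every xⱼ ∈ X \ {xᵢ}, both ⟨g, uᵢⱼ⟩ ≤ g̃ᵢⱼ + (1/2)·μᵢⱼ·‖H(xᵢ)‖ + (1/6)·μᵢⱼ²·γ_H + 2ε̄/μᵢⱼ and −⟨g, uᵢⱼ⟩ ≤ −g̃ᵢⱼ + (1/2)·μᵢⱼ·‖H(xᵢ)‖ + (1/6)·μᵢⱼ²·γ_H + 2ε̄/μᵢⱼ }, where g̃ᵢⱼ = (zⱼ − zᵢ)/μᵢⱼ. -/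

import Mathlib

/-!
Taylor's theorem with a Lipschitz Hessian bounds the second-order remainder along the segment
from `xᵢ` to `xⱼ` by `γ_H μᵢⱼ³ / 6`, and the second-order term by `‖H(xᵢ)‖ μᵢⱼ² / 2`. Hence the
directional derivative `⟨∇f(xᵢ), uᵢⱼ⟩` lies within `‖H(xᵢ)‖ μᵢⱼ / 2 + γ_H μᵢⱼ² / 6` of the exact
difference quotient, and replacing `f` by the noisy values moves the quotient by at most
`2 ε̄ / μᵢⱼ`.
-/

open Set

lemma norm_le_mul_pow_div_of_norm_deriv_le {F : Type*} [NormedAddCommGroup F] [NormedSpace ℝ F]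
    {g g' : ℝ → F} {b C : ℝ} {n : ℕ} (hg : ∀ t, HasDerivAt g (g' t) t) (hg0 : g 0 = 0)
    (hbound : ∀ t ∈ Ico 0 b, ‖g' t‖ ≤ C * t ^ n) :
    ∀ t ∈ Icc 0 b, ‖g t‖ ≤ C * t ^ (n + 1) / (n + 1) := by
  refine image_norm_le_of_norm_deriv_right_le_deriv_boundary
    (fun t _ => (hg t).continuousAt.continuousWithinAt) (fun t _ => (hg t).hasDerivWithinAt)
    (by simp [hg0]) (fun t => ?_) hbound
  refine (((hasDerivAt_pow (n + 1) t).const_mul C).div_const ((n : ℝ) + 1)).congr_deriv ?_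
  rw [Nat.add_sub_cancel]
  push_cast
  field_simp

section Taylor

variable {E F : Type*} [NormedAddCommGroup E] [NormedSpace ℝ E]
  [NormedAddCommGroup F] [NormedSpace ℝ F]

lemma hasDerivAt_comp_add_smul {f : E → F} (hf : Differentiable ℝ f) (x v : E) (t : ℝ) :
    HasDerivAt (fun s : ℝ => f (x + s • v)) (fderiv ℝ f (x + t • v) v) t := by
  have hline : HasDerivAt (fun s : ℝ => x + s • v) v t := by
    simpa using ((hasDerivAt_id t).smul_const v).const_add x
  exact (hf _).hasFDerivAt.comp_hasDerivAt t hline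

lemma norm_iteratedFDeriv_two_apply_sub_le {f : E → F} {γ : ℝ} {x : E}
    (hLip : ∀ y, ‖iteratedFDeriv ℝ 2 f y - iteratedFDeriv ℝ 2 f x‖ ≤ γ * ‖y - x‖) (y v : E) :
    ‖iteratedFDeriv ℝ 2 f y ![v, v] - iteratedFDeriv ℝ 2 f x ![v, v]‖ ≤ γ * ‖y - x‖ * ‖v‖ ^ 2 := by
  rw [← sub_apply]
  calc _ ≤ ‖iteratedFDeriv ℝ 2 f y - iteratedFDeriv ℝ 2 f x‖ * ∏ i, ‖![v, v] i‖ :=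
        ContinuousMultilinearMap.le_opNorm _ _
    _ ≤ γ * ‖y - x‖ * ‖v‖ ^ 2 := by
        simpa [sq] using mul_le_mul_of_nonneg_right (hLip y) (by positivity)

lemma norm_taylor_two_remainder_le {f : E → F} (hf : ContDiff ℝ 2 f) {γ : ℝ} {x : E}
    (hLip : ∀ y, ‖iteratedFDeriv ℝ 2 f y - iteratedFDeriv ℝ 2 f x‖ ≤ γ * ‖y - x‖) (v : E) :
    ‖f (x + v) - f x - fderiv ℝ f x v - (1 / 2 : ℝ) • iteratedFDeriv ℝ 2 f x ![v, v]‖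
      ≤ γ / 6 * ‖v‖ ^ 3 := by
  set H := fderiv ℝ (fderiv ℝ f)
  have hH : ∀ a, iteratedFDeriv ℝ 2 f a ![v, v] = H a v v := fun a => by
    simp [iteratedFDeriv_two_apply, H]
  have hdf : Differentiable ℝ (fderiv ℝ f) :=
    (hf.fderiv_right (le_refl 2)).differentiable one_ne_zero
  have hHess : ∀ t ∈ Ico (0 : ℝ) 1, ‖H (x + t • v) v v - H x v v‖ ≤ γ * ‖v‖ ^ 3 * t ^ 1 := by
    intro t ht
    rw [← hH, ← hH]
    refine (norm_iteratedFDeriv_two_apply_sub_le hLip _ v).trans_eq ?_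
    rw [add_sub_cancel_left, norm_smul, Real.norm_of_nonneg ht.1]
    ring
  -- `ψ` is the second-order Taylor remainder along `t ↦ x + t • v` and `φ = ψ'`; the Lipschitz
  -- bound `‖φ' t‖ ≤ γ ‖v‖³ t` is integrated twice.
  set φ : ℝ → F := fun t => fderiv ℝ f (x + t • v) v - fderiv ℝ f x v - t • H x v v
  have hφ : ∀ t, HasDerivAt φ (H (x + t • v) v v - H x v v) t := fun t => by
    have hD : HasDerivAt (fun s : ℝ => fderiv ℝ f (x + s • v) v) (H (x + t • v) v v) t :=
      (ContinuousLinearMap.apply ℝ F v).hasFDerivAt.comp_hasDerivAt t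
        (hasDerivAt_comp_add_smul hdf x v t)
    exact ((hD.sub_const _).sub ((hasDerivAt_id' t).smul_const (H x v v))).congr_deriv
      (by rw [one_smul])
  have hφle := norm_le_mul_pow_div_of_norm_deriv_le hφ (by simp [φ]) hHess
  set ψ : ℝ → F := fun t =>
    f (x + t • v) - f x - t • fderiv ℝ f x v - (t ^ 2 / 2) • H x v v
  have hψ : ∀ t, HasDerivAt ψ (φ t) t := fun t => by
    have hsq : HasDerivAt (fun s : ℝ => s ^ 2 / 2) t t := by
      simpa using (hasDerivAt_pow 2 t).div_const 2
    exact (((hasDerivAt_comp_add_smul (hf.differentiable two_ne_zero) x v t).sub_const _).sub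
      ((hasDerivAt_id t).smul_const _)).sub (hsq.smul_const _) |>.congr_deriv (by simp [φ])
  have hψle := norm_le_mul_pow_div_of_norm_deriv_le (C := γ * ‖v‖ ^ 3 / 2) (n := 2) hψ
    (by simp [ψ])
    (fun t ht => (hφle t (Ico_subset_Icc_self ht)).trans_eq (by ring))
  convert hψle 1 (right_mem_Icc.mpr zero_le_one) using 1
  · simp [ψ, hH]
  · ring

lemma norm_sub_sub_fderiv_apply_le {f : E → F} (hf : ContDiff ℝ 2 f) {γ : ℝ} {x : E}
    (hLip : ∀ y, ‖iteratedFDeriv ℝ 2 f y - iteratedFDeriv ℝ 2 f x‖ ≤ γ * ‖y - x‖) (v : E) :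
    ‖f (x + v) - f x - fderiv ℝ f x v‖
      ≤ 1 / 2 * ‖iteratedFDeriv ℝ 2 f x‖ * ‖v‖ ^ 2 + γ / 6 * ‖v‖ ^ 3 := by
  have hquad : ‖(1 / 2 : ℝ) • iteratedFDeriv ℝ 2 f x ![v, v]‖
      ≤ 1 / 2 * ‖iteratedFDeriv ℝ 2 f x‖ * ‖v‖ ^ 2 := by
    rw [norm_smul, mul_assoc]
    gcongr
    · norm_num
    · simpa [sq] using (iteratedFDeriv ℝ 2 f x).le_opNorm ![v, v]
  calc _ ≤ ‖(1 / 2 : ℝ) • iteratedFDeriv ℝ 2 f x ![v, v]‖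
          + ‖f (x + v) - f x - fderiv ℝ f x v - (1 / 2 : ℝ) • iteratedFDeriv ℝ 2 f x ![v, v]‖ :=
        norm_le_insert' _ _
    _ ≤ _ := add_le_add hquad (norm_taylor_two_remainder_le hf hLip v)

end Taylor

lemma inner_gradient_eq_fderiv {E : Type*} [NormedAddCommGroup E] [InnerProductSpace ℝ E]
    [CompleteSpace E] (f : E → ℝ) (x v : E) : inner ℝ (gradient f x) v = fderiv ℝ f x v := by
  rw [← toDual_gradient, InnerProductSpace.toDual_apply_apply]

theorem sage_gradient_in_polytope_noisy_general
    {D : ℕ}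
    (f : EuclideanSpace ℝ (Fin D) → ℝ)
    (hf : ContDiff ℝ 2 f)
    (γH : ℝ)
    (hLip : ∀ x₁ x₂ : EuclideanSpace ℝ (Fin D),
      ‖iteratedFDeriv ℝ 2 f x₁ - iteratedFDeriv ℝ 2 f x₂‖ ≤ γH * ‖x₁ - x₂‖)
    (X : Finset (EuclideanSpace ℝ (Fin D)))
    (xi : EuclideanSpace ℝ (Fin D)) (hxi : xi ∈ X)
    (z : EuclideanSpace ℝ (Fin D) → ℝ) (εbar : ℝ)
    (hz : ∀ xj ∈ X, |z xj - f xj| ≤ εbar) :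
    gradient f xi ∈
      { g : EuclideanSpace ℝ (Fin D) |
        ∀ xj ∈ X, xj ≠ xi →
          (inner ℝ g ((‖xj - xi‖)⁻¹ • (xj - xi)) : ℝ) ≤
              (z xj - z xi) / ‖xj - xi‖ +
                (1 / 2) * ‖xj - xi‖ * ‖iteratedFDeriv ℝ 2 f xi‖ +
                (1 / 6) * ‖xj - xi‖ ^ 2 * γH + 2 * εbar / ‖xj - xi‖ ∧
          -(inner ℝ g ((‖xj - xi‖)⁻¹ • (xj - xi)) : ℝ) ≤
              -((z xj - z xi) / ‖xj - xi‖) +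
                (1 / 2) * ‖xj - xi‖ * ‖iteratedFDeriv ℝ 2 f xi‖ +
                (1 / 6) * ‖xj - xi‖ ^ 2 * γH + 2 * εbar / ‖xj - xi‖ } := by
  intro xj hxj hne
  set μ := ‖xj - xi‖
  have hμ : 0 < μ := norm_pos_iff.mpr (sub_ne_zero.mpr hne)
  have hTaylor := norm_sub_sub_fderiv_apply_le hf (fun y => hLip y xi) (xj - xi)
  rw [add_sub_cancel, Real.norm_eq_abs] at hTaylor
  have hnumer : |fderiv ℝ f xi (xj - xi) - (z xj - z xi)|
      ≤ 1 / 2 * ‖iteratedFDeriv ℝ 2 f xi‖ * μ ^ 2 + γH / 6 * μ ^ 3 + 2 * εbar := by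
    have hzj := hz xj hxj
    have hzi := hz xi hxi
    rw [abs_le] at hTaylor hzj hzi ⊢
    constructor <;> linarith [hTaylor.1, hTaylor.2, hzj.1, hzj.2, hzi.1, hzi.2]
  have hquot : |μ⁻¹ * fderiv ℝ f xi (xj - xi) - (z xj - z xi) / μ|
      ≤ 1 / 2 * μ * ‖iteratedFDeriv ℝ 2 f xi‖ + 1 / 6 * μ ^ 2 * γH + 2 * εbar / μ := by
    calc _ = |fderiv ℝ f xi (xj - xi) - (z xj - z xi)| / μ := by
          rw [inv_mul_eq_div, ← sub_div, abs_div, abs_of_pos hμ]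
      _ ≤ (1 / 2 * ‖iteratedFDeriv ℝ 2 f xi‖ * μ ^ 2 + γH / 6 * μ ^ 3 + 2 * εbar) / μ := by
          gcongr
      _ = _ := by field_simp
  rw [real_inner_smul_right, inner_gradient_eq_fderiv]
  obtain ⟨hlower, hupper⟩ := abs_le.mp hquot
  exact ⟨by linarith, by linarith⟩

/-- The true gradient belongs to the noisy polytopic gradient set. -/
theorem sage_gradient_in_polytope_noisy
    {D : ℕ} (hD : 1 ≤ D)
    (f : EuclideanSpace ℝ (Fin D) → ℝ)
    (hf : ContDiff ℝ 2 f)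
    (γH : ℝ) (hγH : 0 ≤ γH)
    (hLip : ∀ x₁ x₂ : EuclideanSpace ℝ (Fin D),
      ‖iteratedFDeriv ℝ 2 f x₁ - iteratedFDeriv ℝ 2 f x₂‖ ≤ γH * ‖x₁ - x₂‖)
    (X : Finset (EuclideanSpace ℝ (Fin D)))
    (xi : EuclideanSpace ℝ (Fin D)) (hxi : xi ∈ X)
    (z : EuclideanSpace ℝ (Fin D) → ℝ) (εbar : ℝ) (hεbar : 0 ≤ εbar)
    (hz : ∀ xj ∈ X, |z xj - f xj| ≤ εbar) :
    gradient f xi ∈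
      { g : EuclideanSpace ℝ (Fin D) |
        ∀ xj ∈ X, xj ≠ xi →
          (inner ℝ g ((‖xj - xi‖)⁻¹ • (xj - xi)) : ℝ) ≤
              (z xj - z xi) / ‖xj - xi‖ +
                (1 / 2) * ‖xj - xi‖ * ‖iteratedFDeriv ℝ 2 f xi‖ +
                (1 / 6) * ‖xj - xi‖ ^ 2 * γH + 2 * εbar / ‖xj - xi‖ ∧
          -(inner ℝ g ((‖xj - xi‖)⁻¹ • (xj - xi)) : ℝ) ≤
              -((z xj - z xi) / ‖xj - xi‖) +
                (1 / 2) * ‖xj - xi‖ * ‖iteratedFDeriv ℝ 2 f xi‖ +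
                (1 / 6) * ‖xj - xi‖ ^ 2 * γH + 2 * εbar / ‖xj - xi‖ } :=
  sage_gradient_in_polytope_noisy_general f hf γH hLip X xi hxi z εbar hz
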